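/- arXiv:1803.01298 — 2 statements merged into one kernel-verified Lean document; each statement's English description precedes it below -/
import Mathlib

section
/- Let f : ℝⁿ → ℝ be differentiable with L-Lipschitz-continuous gradient (L > 0), ψ : ℝⁿ → ℝ ∪ {+∞} convex, proper, and closed, F = f + ψ, and let H be a symmetric matrix with dᵀHd ≥ σ‖d‖² for all d, σ > 0. Suppose d satisfies Q(d) ≤ (1 − η)Q* for some η ∈ [0,1), and let γ ∈ (0,1). Then for every α with 0 < α ≤ min{1, 2(1 − γ)σ/(L(1 + √η))}, the Armijo condition F(x + αd) ≤ F(x) + αγΔ holds; in particular, backtracking with factor β ∈ (0,1) starting from α = 1 terminates with a step size α ≥ min{1, 2β(1 − γ)σ/(L(1 + √η))}. -/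
/-
Setting: minimize F = f + ψ over ℝⁿ (modeled as `EuclideanSpace ℝ (Fin n)`), where
f : ℝⁿ → ℝ is smooth and ψ : ℝⁿ → ℝ ∪ {+∞} (modeled as `EReal`-valued, never ⊥)
is convex, proper and closed.  The quadratic model at x with symmetric operator H is
Q(d) = ⟪∇f(x), d⟫ + (1/2)⟪H d, d⟫ + ψ(x+d) − ψ(x), and Δ(d) = ⟪∇f(x), d⟫ + ψ(x+d) − ψ(x).
-/

open scoped RealInnerProductSpace
open Set Filter Topology

noncomputable section

/-- Convexity for extended-real-valued functions (values in ℝ ∪ {±∞}). -/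
def ConvexE {n : ℕ} (g : EuclideanSpace ℝ (Fin n) → EReal) : Prop :=
  ∀ x y : EuclideanSpace ℝ (Fin n), ∀ a b : ℝ, 0 ≤ a → 0 ≤ b → a + b = 1 →
    g (a • x + b • y) ≤ (a : EReal) * g x + (b : EReal) * g y

/-- ψ is proper: it never takes the value −∞ (its values lie in ℝ ∪ {+∞})
and it is finite somewhere. -/
def ProperPsi {n : ℕ} (ψ : EuclideanSpace ℝ (Fin n) → EReal) : Prop :=
  (∀ x, ψ x ≠ ⊥) ∧ ∃ x, ψ x ≠ ⊤

/-- ψ is closed, i.e. lower semicontinuous. -/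
def ClosedPsi {n : ℕ} (ψ : EuclideanSpace ℝ (Fin n) → EReal) : Prop :=
  LowerSemicontinuous ψ

/-- H is a symmetric (self-adjoint) linear operator. -/
def SymmCLM {n : ℕ} (H : EuclideanSpace ℝ (Fin n) →L[ℝ] EuclideanSpace ℝ (Fin n)) : Prop :=
  ∀ u v, ⟪H u, v⟫ = ⟪u, H v⟫

/-- m is the smallest eigenvalue of the symmetric operator H
(characterized as the minimum of the Rayleigh quotient over the unit sphere). -/
def IsSmallestEigenvalue {n : ℕ} (H : EuclideanSpace ℝ (Fin n) →L[ℝ] EuclideanSpace ℝ (Fin n))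
    (m : ℝ) : Prop :=
  IsLeast {r : ℝ | ∃ u : EuclideanSpace ℝ (Fin n), ‖u‖ = 1 ∧ r = ⟪H u, u⟫} m

/-- The objective F = f + ψ (extended-real-valued). -/
def Fm {n : ℕ} (f : EuclideanSpace ℝ (Fin n) → ℝ) (ψ : EuclideanSpace ℝ (Fin n) → EReal)
    (x : EuclideanSpace ℝ (Fin n)) : EReal :=
  (f x : EReal) + ψ x

/-- The quadratic model Q(d) = ∇f(x)ᵀd + (1/2)dᵀHd + ψ(x+d) − ψ(x). -/
def Qm {n : ℕ} (f : EuclideanSpace ℝ (Fin n) → ℝ) (ψ : EuclideanSpace ℝ (Fin n) → EReal)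
    (H : EuclideanSpace ℝ (Fin n) →L[ℝ] EuclideanSpace ℝ (Fin n))
    (x d : EuclideanSpace ℝ (Fin n)) : EReal :=
  ((⟪gradient f x, d⟫ + 1 / 2 * ⟪H d, d⟫ : ℝ) : EReal) + ψ (x + d) - ψ x

/-- Δ(d) = ∇f(x)ᵀd + ψ(x+d) − ψ(x). -/
def Dm {n : ℕ} (f : EuclideanSpace ℝ (Fin n) → ℝ) (ψ : EuclideanSpace ℝ (Fin n) → EReal)
    (x d : EuclideanSpace ℝ (Fin n)) : EReal :=
  ((⟪gradient f x, d⟫ : ℝ) : EReal) + ψ (x + d) - ψ x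

/-- g is σ-strongly convex: g − (σ/2)‖·‖² is convex. -/
def StrongConvexE {n : ℕ} (σ : ℝ) (g : EuclideanSpace ℝ (Fin n) → EReal) : Prop :=
  ConvexE (fun d => g d - ((σ / 2 * ‖d‖ ^ 2 : ℝ) : EReal))

/-- The solution set Ω = argmin F. -/
def SolSet {n : ℕ} (f : EuclideanSpace ℝ (Fin n) → ℝ)
    (ψ : EuclideanSpace ℝ (Fin n) → EReal) : Set (EuclideanSpace ℝ (Fin n)) :=
  {y | ∀ z, Fm f ψ y ≤ Fm f ψ z}

/-!
Comparing `Q(d) ≤ (1 - η) Q*` with the model along the segment `t ↦ t • d`, where convexity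
bounds `ψ(x + t d)` by the chord, gives `Δ + dᵀHd / 2 ≤ (1 - η) (t Δ + t² dᵀHd / 2)` for all
`t ∈ [0, 1]`; at `t = 1 / (1 + √η)` this says `Δ (1 + √η) ≤ -dᵀHd ≤ -σ ‖d‖²`.
The descent lemma and convexity of `ψ` give `F(x + α d) ≤ F(x) + α Δ + α² L ‖d‖² / 2`, which is
at most `F(x) + α γ Δ` once `α ≤ 2 (1 - γ) σ / (L (1 + √η))`. Backtracking therefore stops at
the first power of `β` in that range or one step later.
-/

section Descent

variable {E : Type*} [NormedAddCommGroup E] [InnerProductSpace ℝ E] [CompleteSpace E]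

theorem hasDerivAt_comp_add_smul {f : E → ℝ} {x v : E} {t : ℝ}
    (hf : DifferentiableAt ℝ f (x + t • v)) :
    HasDerivAt (fun s : ℝ => f (x + s • v)) ⟪gradient f (x + t • v), v⟫ t := by
  have hline : HasDerivAt (fun s : ℝ => x + s • v) v t := by
    simpa using ((hasDerivAt_id t).smul_const v).const_add x
  simpa only [InnerProductSpace.toDual_apply_apply, Function.comp_def] using
    hf.hasGradientAt.hasFDerivAt.comp_hasDerivAt t hline

theorem descent_lemma {f : E → ℝ} {L : ℝ} (hf : Differentiable ℝ f)
    (hlip : ∀ y z, ‖gradient f y - gradient f z‖ ≤ L * ‖y - z‖) (x v : E) :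
    f (x + v) ≤ f x + ⟪gradient f x, v⟫ + L / 2 * ‖v‖ ^ 2 := by
  let g : ℝ → ℝ := fun t => f (x + t • v) - t * ⟪gradient f x, v⟫ - L / 2 * t ^ 2 * ‖v‖ ^ 2
  have hg : ∀ t, HasDerivAt g
      (⟪gradient f (x + t • v), v⟫ - ⟪gradient f x, v⟫ - L * t * ‖v‖ ^ 2) t := by
    intro t
    have hlin : HasDerivAt (fun s : ℝ => s * ⟪gradient f x, v⟫) ⟪gradient f x, v⟫ t := by
      simpa using (hasDerivAt_id t).mul_const ⟪gradient f x, v⟫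
    have hquad : HasDerivAt (fun s : ℝ => L / 2 * s ^ 2 * ‖v‖ ^ 2) (L * t * ‖v‖ ^ 2) t :=
      (((hasDerivAt_pow 2 t).const_mul (L / 2)).mul_const (‖v‖ ^ 2)).congr_deriv (by push_cast; ring)
    exact ((hasDerivAt_comp_add_smul (hf _)).sub hlin).sub hquad
  have hg' : ∀ t ∈ interior (Icc (0 : ℝ) 1), deriv g t ≤ 0 := by
    intro t ht
    rw [interior_Icc] at ht
    rw [(hg t).deriv, ← inner_sub_left, sub_nonpos]
    calc ⟪gradient f (x + t • v) - gradient f x, v⟫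
        ≤ ‖gradient f (x + t • v) - gradient f x‖ * ‖v‖ := real_inner_le_norm _ _
      _ ≤ L * ‖t • v‖ * ‖v‖ := by
          gcongr
          simpa using hlip (x + t • v) x
      _ = L * t * ‖v‖ ^ 2 := by rw [norm_smul, Real.norm_of_nonneg ht.1.le]; ring
  have hanti : AntitoneOn g (Icc 0 1) :=
    antitoneOn_of_deriv_nonpos (convex_Icc 0 1) (fun t _ => (hg t).continuousAt.continuousWithinAt)
      (fun t _ => (hg t).differentiableAt.differentiableWithinAt) hg'
  have hg01 := hanti (left_mem_Icc.2 zero_le_one) (right_mem_Icc.2 zero_le_one) zero_le_one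
  simp only [g, one_smul, zero_smul, add_zero] at hg01
  linarith

end Descent

theorem mul_one_add_sqrt_le_neg {Δ h η : ℝ} (hη : 0 ≤ η)
    (hseg : ∀ t ∈ Icc (0 : ℝ) 1, Δ + h / 2 ≤ (1 - η) * (t * Δ + t ^ 2 * h / 2)) :
    Δ * (1 + √η) ≤ -h := by
  obtain ⟨s, hs, rfl⟩ : ∃ s, 0 ≤ s ∧ η = s ^ 2 := ⟨√η, Real.sqrt_nonneg η, (Real.sq_sqrt hη).symm⟩
  rw [Real.sqrt_sq hs]
  rcases hs.eq_or_lt with rfl | hs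
  · -- for `η = 0` the bound `Δ ≤ -(1 + t) h / 2`, valid for `t < 1`, only reaches `-h` in the limit
    rw [add_zero, mul_one]
    have hlim : Tendsto (fun t : ℝ => -(1 + t) * h / 2) (𝓝[<] 1) (𝓝 (-h)) := by
      rw [show -h = -(1 + 1) * h / 2 by ring]
      exact (Continuous.tendsto (by fun_prop) 1).mono_left nhdsWithin_le_nhds
    refine ge_of_tendsto hlim ?_
    filter_upwards [Ioo_mem_nhdsLT zero_lt_one] with t ht
    have := hseg t (Ioo_subset_Icc_self ht)
    nlinarith [ht.2]
  · -- `t = 1 / (1 + √η)` minimises the right-hand side in the extremal case `Δ (1 + √η) = -h`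
    have h1s : 0 < 1 + s := by linarith
    have ht := hseg (1 / (1 + s)) ⟨by positivity, by rw [div_le_one h1s]; linarith⟩
    rw [show (1 - s ^ 2) * (1 / (1 + s) * Δ + (1 / (1 + s)) ^ 2 * h / 2)
      = Δ + h / 2 - s * (Δ * (1 + s) + h) / (1 + s) by field_simp; ring] at ht
    have hprod := (div_le_iff₀ h1s).1 (by linarith : s * (Δ * (1 + s) + h) / (1 + s) ≤ 0)
    nlinarith

section Model

variable {n : ℕ} {f : EuclideanSpace ℝ (Fin n) → ℝ} {ψ : EuclideanSpace ℝ (Fin n) → EReal}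
  {H : EuclideanSpace ℝ (Fin n) →L[ℝ] EuclideanSpace ℝ (Fin n)} {x d : EuclideanSpace ℝ (Fin n)}
  {p₀ p₁ : ℝ}

theorem ConvexE.le_segment (hψ : ConvexE ψ) (h₀ : ψ x = p₀) (h₁ : ψ (x + d) = p₁) {t : ℝ}
    (ht : t ∈ Icc (0 : ℝ) 1) : ψ (x + t • d) ≤ ((1 - t) * p₀ + t * p₁ : ℝ) := by
  have := hψ x (x + d) (1 - t) t (by linarith [ht.2]) ht.1 (by ring)
  rw [show (1 - t) • x + t • (x + d) = x + t • d by module, h₀, h₁] at this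
  exact_mod_cast this

theorem Qm_zero (h₀ : ψ x = p₀) : Qm f ψ H x 0 = 0 := by
  simp [Qm, h₀]

theorem Qm_eq_coe (h₀ : ψ x = p₀) (h₁ : ψ (x + d) = p₁) :
    Qm f ψ H x d = ((⟪gradient f x, d⟫ + p₁ - p₀) + ⟪H d, d⟫ / 2 : ℝ) := by
  rw [Qm, h₀, h₁]
  norm_cast
  ring

theorem Dm_eq_coe (h₀ : ψ x = p₀) (h₁ : ψ (x + d) = p₁) :
    Dm f ψ x d = (⟪gradient f x, d⟫ + p₁ - p₀ : ℝ) := by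
  rw [Dm, h₀, h₁]
  norm_cast

theorem Qm_smul_le (hψ : ConvexE ψ) (h₀ : ψ x = p₀) (h₁ : ψ (x + d) = p₁) {t : ℝ}
    (ht : t ∈ Icc (0 : ℝ) 1) :
    Qm f ψ H x (t • d) ≤ (t * (⟪gradient f x, d⟫ + p₁ - p₀) + t ^ 2 * ⟪H d, d⟫ / 2 : ℝ) := by
  calc Qm f ψ H x (t • d)
      ≤ ((⟪gradient f x, t • d⟫ + 1 / 2 * ⟪H (t • d), t • d⟫ : ℝ) : EReal)
          + ((1 - t) * p₀ + t * p₁ : ℝ) - p₀ := by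
        rw [Qm, h₀]
        exact EReal.sub_le_sub (add_le_add le_rfl (hψ.le_segment h₀ h₁ ht)) le_rfl
    _ = _ := by
        rw [map_smul, real_inner_smul_left, real_inner_smul_right, real_inner_smul_right]
        norm_cast
        ring

theorem Qm_le_mul_Qm_of_le_iInf {η : ℝ} (hη : η ≤ 1)
    (happrox : Qm f ψ H x d ≤ ((1 - η : ℝ) : EReal) * ⨅ e, Qm f ψ H x e)
    (e : EuclideanSpace ℝ (Fin n)) : Qm f ψ H x d ≤ ((1 - η : ℝ) : EReal) * Qm f ψ H x e :=
  happrox.trans (mul_le_mul_of_nonneg_left (iInf_le _ e) (by exact_mod_cast sub_nonneg.2 hη))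

theorem apply_add_ne_top_of_le_iInf {η : ℝ} (h₀ : ψ x = p₀) (hη : η ≤ 1)
    (happrox : Qm f ψ H x d ≤ ((1 - η : ℝ) : EReal) * ⨅ e, Qm f ψ H x e) :
    ψ (x + d) ≠ ⊤ := by
  intro htop
  have := Qm_le_mul_Qm_of_le_iInf hη happrox 0
  rw [Qm_zero h₀, mul_zero, Qm, htop, h₀, EReal.coe_add_top, EReal.top_sub_coe] at this
  exact not_le.2 EReal.zero_lt_top this

theorem mul_one_add_sqrt_le_of_le_iInf {η : ℝ} (hψ : ConvexE ψ) (h₀ : ψ x = p₀)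
    (h₁ : ψ (x + d) = p₁) (hη0 : 0 ≤ η) (hη1 : η ≤ 1)
    (happrox : Qm f ψ H x d ≤ ((1 - η : ℝ) : EReal) * ⨅ e, Qm f ψ H x e) :
    (⟪gradient f x, d⟫ + p₁ - p₀) * (1 + √η) ≤ -⟪H d, d⟫ := by
  refine mul_one_add_sqrt_le_neg hη0 fun t ht => ?_
  have := (Qm_le_mul_Qm_of_le_iInf hη1 happrox (t • d)).trans
    (mul_le_mul_of_nonneg_left (Qm_smul_le hψ h₀ h₁ ht) (by exact_mod_cast sub_nonneg.2 hη1))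
  rw [Qm_eq_coe h₀ h₁] at this
  exact_mod_cast this

theorem armijo_of_step_le {L α γ : ℝ} (hf : Differentiable ℝ f)
    (hlip : ∀ y z, ‖gradient f y - gradient f z‖ ≤ L * ‖y - z‖) (hψ : ConvexE ψ)
    (h₀ : ψ x = p₀) (h₁ : ψ (x + d) = p₁) (hα0 : 0 ≤ α) (hα1 : α ≤ 1)
    (hstep : α * L / 2 * ‖d‖ ^ 2 ≤ (1 - γ) * -(⟪gradient f x, d⟫ + p₁ - p₀)) :
    Fm f ψ (x + α • d) ≤ Fm f ψ x + ((α * γ : ℝ) : EReal) * Dm f ψ x d := by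
  have hdesc := descent_lemma hf hlip x (α • d)
  rw [real_inner_smul_right, norm_smul, Real.norm_of_nonneg hα0] at hdesc
  calc Fm f ψ (x + α • d) ≤ (f (x + α • d) + ((1 - α) * p₀ + α * p₁) : ℝ) := by
        rw [Fm, EReal.coe_add]
        gcongr
        exact hψ.le_segment h₀ h₁ ⟨hα0, hα1⟩
    _ ≤ (f x + p₀ + α * γ * (⟪gradient f x, d⟫ + p₁ - p₀) : ℝ) := by
        refine EReal.coe_le_coe_iff.2 ?_
        nlinarith [mul_le_mul_of_nonneg_left hstep hα0]
    _ = Fm f ψ x + ((α * γ : ℝ) : EReal) * Dm f ψ x d := by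
        rw [Fm, Dm_eq_coe h₀ h₁, h₀]
        norm_cast

end Model

theorem exists_isLeast_backtracking_step {P : ℝ → Prop} {c β : ℝ} (hc : 0 < c) (hβ0 : 0 < β)
    (hβ1 : β < 1) (hP : ∀ α, 0 < α → α ≤ min 1 c → P α) :
    ∃ i : ℕ, IsLeast {j : ℕ | P (β ^ j)} i ∧ min 1 (β * c) ≤ β ^ i := by
  classical
  have hex : ∃ j, P (β ^ j) := by
    obtain ⟨j, hj⟩ := exists_pow_lt_of_lt_one (lt_min one_pos hc) hβ1
    exact ⟨j, hP _ (pow_pos hβ0 j) hj.le⟩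
  refine ⟨Nat.find hex, ⟨Nat.find_spec hex, fun j hj => Nat.find_min' hex hj⟩, ?_⟩
  rcases h : Nat.find hex with _ | k
  · simp
  · have hk : ¬P (β ^ k) := Nat.find_min hex (by omega)
    have hck : c < β ^ k := by
      rcases min_lt_iff.1 (not_le.1 (mt (hP _ (pow_pos hβ0 k)) hk)) with h1 | h1
      · exact absurd h1 (not_lt.2 (pow_le_one₀ hβ0.le hβ1.le))
      · exact h1
    calc min 1 (β * c) ≤ β * c := min_le_right _ _
      _ ≤ β ^ (k + 1) := by rw [pow_succ']; gcongr

theorem armijo_line_search_bound_posdef_general {n : ℕ}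
    (f : EuclideanSpace ℝ (Fin n) → ℝ) (ψ : EuclideanSpace ℝ (Fin n) → EReal)
    (H : EuclideanSpace ℝ (Fin n) →L[ℝ] EuclideanSpace ℝ (Fin n))
    (x d : EuclideanSpace ℝ (Fin n)) (L σ η γ : ℝ)
    (hf : Differentiable ℝ f) (hL : 0 < L)
    (hlip : ∀ y z, ‖gradient f y - gradient f z‖ ≤ L * ‖y - z‖)
    (hψconv : ConvexE ψ) (hψproper : ProperPsi ψ)
    (hdom : ψ x ≠ ⊤)
    (hσ : 0 < σ) (hσH : ∀ e : EuclideanSpace ℝ (Fin n), σ * ‖e‖ ^ 2 ≤ ⟪H e, e⟫)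
    (hη0 : 0 ≤ η) (hη1 : η < 1)
    (happrox : Qm f ψ H x d ≤ ((1 - η : ℝ) : EReal) * ⨅ e, Qm f ψ H x e)
    (hγ1 : γ < 1) :
    (∀ α : ℝ, 0 < α → α ≤ min 1 (2 * (1 - γ) * σ / (L * (1 + Real.sqrt η))) →
        Fm f ψ (x + α • d) ≤ Fm f ψ x + ((α * γ : ℝ) : EReal) * Dm f ψ x d) ∧
      ∀ β : ℝ, 0 < β → β < 1 →
        ∃ i : ℕ,
          IsLeast {j : ℕ |
              Fm f ψ (x + β ^ j • d) ≤ Fm f ψ x + ((β ^ j * γ : ℝ) : EReal) * Dm f ψ x d} i ∧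
            min 1 (2 * β * (1 - γ) * σ / (L * (1 + Real.sqrt η))) ≤ β ^ i := by
  obtain ⟨p₀, h₀⟩ : ∃ p : ℝ, ψ x = p := ⟨_, (EReal.coe_toReal hdom (hψproper.1 x)).symm⟩
  obtain ⟨p₁, h₁⟩ : ∃ p : ℝ, ψ (x + d) = p :=
    ⟨_, (EReal.coe_toReal (apply_add_ne_top_of_le_iInf h₀ hη1.le happrox) (hψproper.1 _)).symm⟩
  have hΔ : σ * ‖d‖ ^ 2 / (1 + √η) ≤ -(⟪gradient f x, d⟫ + p₁ - p₀) := by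
    rw [div_le_iff₀ (by positivity)]
    linarith [mul_one_add_sqrt_le_of_le_iInf hψconv h₀ h₁ hη0 hη1.le happrox, hσH d]
  set c := 2 * (1 - γ) * σ / (L * (1 + √η)) with hc_def
  have armijo : ∀ α : ℝ, 0 < α → α ≤ min 1 c →
      Fm f ψ (x + α • d) ≤ Fm f ψ x + ((α * γ : ℝ) : EReal) * Dm f ψ x d := by
    intro α hα hαc
    refine armijo_of_step_le hf hlip hψconv h₀ h₁ hα.le (hαc.trans (min_le_left _ _)) ?_
    calc α * L / 2 * ‖d‖ ^ 2 ≤ c * L / 2 * ‖d‖ ^ 2 := by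
          gcongr
          exact hαc.trans (min_le_right _ _)
      _ = (1 - γ) * (σ * ‖d‖ ^ 2 / (1 + √η)) := by
          rw [hc_def]
          field_simp
      _ ≤ (1 - γ) * -(⟪gradient f x, d⟫ + p₁ - p₀) :=
          mul_le_mul_of_nonneg_left hΔ (sub_nonneg.2 hγ1.le)
  have hc : 0 < c := div_pos (mul_pos (mul_pos two_pos (sub_pos.2 hγ1)) hσ) (by positivity)
  refine ⟨armijo, fun β hβ0 hβ1 => ?_⟩
  rw [show 2 * β * (1 - γ) * σ / (L * (1 + √η)) = β * c by ring]
  exact exists_isLeast_backtracking_step hc hβ0 hβ1 armijo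

/-- With ∇f L-Lipschitz and dᵀHd ≥ σ‖d‖² (σ > 0), if d satisfies
Q(d) ≤ (1 − η)Q* for some η ∈ [0,1) and γ ∈ (0,1), then every step size
α ∈ (0, min{1, 2(1−γ)σ/(L(1+√η))}] satisfies the Armijo condition
F(x+αd) ≤ F(x) + αγΔ; in particular backtracking from α = 1 with factor β ∈ (0,1)
terminates with α ≥ min{1, 2β(1−γ)σ/(L(1+√η))}. -/
theorem armijo_line_search_bound_posdef {n : ℕ}
    (f : EuclideanSpace ℝ (Fin n) → ℝ) (ψ : EuclideanSpace ℝ (Fin n) → EReal)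
    (H : EuclideanSpace ℝ (Fin n) →L[ℝ] EuclideanSpace ℝ (Fin n))
    (x d : EuclideanSpace ℝ (Fin n)) (L σ η γ : ℝ)
    (hf : Differentiable ℝ f) (hL : 0 < L)
    (hlip : ∀ y z, ‖gradient f y - gradient f z‖ ≤ L * ‖y - z‖)
    (hψconv : ConvexE ψ) (hψproper : ProperPsi ψ) (hψclosed : ClosedPsi ψ)
    (hdom : ψ x ≠ ⊤)
    (hH : SymmCLM H)
    (hσ : 0 < σ) (hσH : ∀ e : EuclideanSpace ℝ (Fin n), σ * ‖e‖ ^ 2 ≤ ⟪H e, e⟫)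
    (hη0 : 0 ≤ η) (hη1 : η < 1)
    (happrox : Qm f ψ H x d ≤ ((1 - η : ℝ) : EReal) * ⨅ e, Qm f ψ H x e)
    (hγ0 : 0 < γ) (hγ1 : γ < 1) :
    (∀ α : ℝ, 0 < α → α ≤ min 1 (2 * (1 - γ) * σ / (L * (1 + Real.sqrt η))) →
        Fm f ψ (x + α • d) ≤ Fm f ψ x + ((α * γ : ℝ) : EReal) * Dm f ψ x d) ∧
      ∀ β : ℝ, 0 < β → β < 1 →
        ∃ i : ℕ,
          IsLeast {j : ℕ |
              Fm f ψ (x + β ^ j • d) ≤ Fm f ψ x + ((β ^ j * γ : ℝ) : EReal) * Dm f ψ x d} i ∧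
            min 1 (2 * β * (1 - γ) * σ / (L * (1 + Real.sqrt η))) ≤ β ^ i :=
  armijo_line_search_bound_posdef_general f ψ H x d L σ η γ hf hL hlip hψconv hψproper hdom hσ hσH
    hη0 hη1 happrox hγ1
end
end

section
/- Let f : ℝⁿ → ℝ be convex and differentiable, ψ : ℝⁿ → ℝ ∪ {+∞} convex, proper, and closed, F = f + ψ, and let x* be a minimizer of F with F* = F(x*). Let H be a symmetric positive semidefinite matrix, γ ∈ (0,1), η ∈ [0,1), α ∈ (0,1], and suppose: (a) d satisfies Q(d) ≤ (1 − η)Q*; (b) the Armijo condition F(x + αd) ≤ F(x) + αγΔ holds, where Δ = ∇f(x)ᵀd + ψ(x+d) − ψ(x); and (c) F(x) − F* ≥ (x − x*)ᵀH(x − x*). Then F(x + αd) − F* ≤ (1 − (1 − η)γα/2)·(F(x) − F*). -/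
/-
Setting: minimize F = f + ψ over ℝⁿ (modeled as `EuclideanSpace ℝ (Fin n)`), where
f : ℝⁿ → ℝ is smooth and ψ : ℝⁿ → ℝ ∪ {+∞} (modeled as `EReal`-valued, never ⊥)
is convex, proper and closed.  The quadratic model at x with symmetric operator H is
Q(d) = ⟪∇f(x), d⟫ + (1/2)⟪H d, d⟫ + ψ(x+d) − ψ(x), and Δ(d) = ⟪∇f(x), d⟫ + ψ(x+d) − ψ(x).
-/

open scoped RealInnerProductSpace
open Set Filter Topology

noncomputable section

/-! Testing the quadratic model at the direction `x* - x`, the gradient inequality for `f` and the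
growth condition give `Q* ≤ Q(x* - x) ≤ -(F(x) - F*)/2`. As `H` is positive semidefinite,
`Δ ≤ Q(d) ≤ (1 - η) Q*`, and the Armijo condition turns this bound on `Δ` into the decrease of
`F(x + αd) - F*`. -/

theorem ConvexOn.le_sub_of_hasFDerivAt {E : Type*} [NormedAddCommGroup E] [NormedSpace ℝ E]
    {s : Set E} {f : E → ℝ} {f' : E →L[ℝ] ℝ} {x y : E} (hc : ConvexOn ℝ s f)
    (hx : x ∈ s) (hy : y ∈ s) (hf : HasFDerivAt f f' x) : f' (y - x) ≤ f y - f x := by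
  have hline : HasDerivAt (f ∘ AffineMap.lineMap (k := ℝ) x y) (f' (y - x)) 0 :=
    hf.comp_hasDerivAt_of_eq 0 AffineMap.hasDerivAt_lineMap (by simp)
  have hslope := (hc.comp_affineMap (AffineMap.lineMap x y)).le_slope_of_hasDerivAt
    (x := 0) (y := 1) (by simpa using hx) (by simpa using hy) one_pos hline
  simpa [slope] using hslope

theorem ConvexOn.inner_gradient_le_sub {E : Type*} [NormedAddCommGroup E] [InnerProductSpace ℝ E]
    [CompleteSpace E] {s : Set E} {f : E → ℝ} {x y : E} (hc : ConvexOn ℝ s f)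
    (hx : x ∈ s) (hy : y ∈ s) (hf : DifferentiableAt ℝ f x) :
    ⟪gradient f x, y - x⟫ ≤ f y - f x := by
  simpa using hc.le_sub_of_hasFDerivAt hx hy hf.hasGradientAt.hasFDerivAt

section QuadraticModel

variable {n : ℕ} {f : EuclideanSpace ℝ (Fin n) → ℝ} {ψ : EuclideanSpace ℝ (Fin n) → EReal}
  {H : EuclideanSpace ℝ (Fin n) →L[ℝ] EuclideanSpace ℝ (Fin n)} {x y d : EuclideanSpace ℝ (Fin n)}

theorem Fm_eq_coe {p : ℝ} (hp : ψ x = p) : Fm f ψ x = ((f x + p : ℝ) : EReal) := by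
  rw [Fm, hp, EReal.coe_add]

theorem ne_top_of_Fm_le_coe {c : ℝ} (h : Fm f ψ x ≤ c) : ψ x ≠ ⊤ := by
  rintro hx
  rw [Fm, hx, EReal.coe_add_top, top_le_iff] at h
  exact EReal.coe_ne_top c h

theorem Dm_le_Qm (hd : 0 ≤ ⟪H d, d⟫) : Dm f ψ x d ≤ Qm f ψ H x d := by
  refine EReal.sub_le_sub (add_le_add_left ?_ _) le_rfl
  exact EReal.coe_le_coe (by linarith)

theorem Qm_sub_le_neg_half_gap (hfc : ConvexOn ℝ univ f) (hfx : DifferentiableAt ℝ f x)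
    {p q : ℝ} (hp : ψ x = p) (hq : ψ y = q)
    (hgrowth : ⟪H (x - y), x - y⟫ ≤ (f x + p) - (f y + q)) :
    Qm f ψ H x (y - x) ≤ ((-((f x + p) - (f y + q)) / 2 : ℝ) : EReal) := by
  have hgrad := hfc.inner_gradient_le_sub (mem_univ x) (mem_univ y) hfx
  have hH : ⟪H (y - x), y - x⟫ = ⟪H (x - y), x - y⟫ := by
    rw [← neg_sub x y, map_neg, inner_neg_neg]
  rw [Qm, add_sub_cancel, hp, hq, ← EReal.coe_add, ← EReal.coe_sub, EReal.coe_le_coe_iff, hH]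
  linarith

end QuadraticModel

theorem fast_linear_decrease_step_general {n : ℕ}
    (f : EuclideanSpace ℝ (Fin n) → ℝ) (ψ : EuclideanSpace ℝ (Fin n) → EReal)
    (H : EuclideanSpace ℝ (Fin n) →L[ℝ] EuclideanSpace ℝ (Fin n))
    (x xstar d : EuclideanSpace ℝ (Fin n)) (γ η α : ℝ)
    (hf : Differentiable ℝ f) (hfconv : ConvexOn ℝ Set.univ f)
    (hψproper : ProperPsi ψ)
    (hdom : ψ x ≠ ⊤)
    (hHpsd : ∀ e : EuclideanSpace ℝ (Fin n), 0 ≤ ⟪H e, e⟫)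
    (hmin : ∀ y, Fm f ψ xstar ≤ Fm f ψ y)
    (hγ0 : 0 < γ) (hη1 : η < 1)
    (hα0 : 0 < α)
    (happrox : Qm f ψ H x d ≤ ((1 - η : ℝ) : EReal) * ⨅ e, Qm f ψ H x e)
    (harmijo : Fm f ψ (x + α • d) ≤ Fm f ψ x + ((α * γ : ℝ) : EReal) * Dm f ψ x d)
    (hgrowth : ((⟪H (x - xstar), x - xstar⟫ : ℝ) : EReal) ≤ Fm f ψ x - Fm f ψ xstar) :
    Fm f ψ (x + α • d) - Fm f ψ xstar ≤
      ((1 - (1 - η) * γ * α / 2 : ℝ) : EReal) * (Fm f ψ x - Fm f ψ xstar) := by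
  obtain ⟨p, hp⟩ : ∃ p : ℝ, ψ x = p := ⟨_, (EReal.coe_toReal hdom (hψproper.1 x)).symm⟩
  have hFx : Fm f ψ x = ((f x + p : ℝ) : EReal) := Fm_eq_coe hp
  have hstar : ψ xstar ≠ ⊤ := ne_top_of_Fm_le_coe (hFx ▸ hmin x)
  obtain ⟨q, hq⟩ : ∃ q : ℝ, ψ xstar = q :=
    ⟨_, (EReal.coe_toReal hstar (hψproper.1 xstar)).symm⟩
  rw [hFx] at harmijo
  rw [hFx, Fm_eq_coe hq, ← EReal.coe_sub] at hgrowth ⊢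
  set r := f x + p - (f xstar + q)
  have hQ := Qm_sub_le_neg_half_gap hfconv (hf x) hp hq (EReal.coe_le_coe_iff.1 hgrowth)
  have hD : Dm f ψ x d ≤ (((1 - η) * (-r / 2) : ℝ) : EReal) :=
    calc Dm f ψ x d ≤ Qm f ψ H x d := Dm_le_Qm (hHpsd d)
      _ ≤ ((1 - η : ℝ) : EReal) * ⨅ e, Qm f ψ H x e := happrox
      _ ≤ ((1 - η : ℝ) : EReal) * ((-r / 2 : ℝ) : EReal) :=
        mul_le_mul_of_nonneg_left ((iInf_le _ _).trans hQ) (EReal.coe_nonneg.2 (by linarith))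
      _ = _ := (EReal.coe_mul _ _).symm
  calc Fm f ψ (x + α • d) - ((f xstar + q : ℝ) : EReal)
      ≤ ((f x + p : ℝ) : EReal) + ((α * γ : ℝ) : EReal) * (((1 - η) * (-r / 2) : ℝ) : EReal)
          - ((f xstar + q : ℝ) : EReal) :=
        EReal.sub_le_sub (harmijo.trans (add_le_add_right
          (mul_le_mul_of_nonneg_left hD (EReal.coe_nonneg.2 (by positivity))) _)) le_rfl
    _ = _ := by norm_cast; ring

/-- With f convex differentiable, x* a minimizer of F, H symmetric psd,
γ ∈ (0,1), η ∈ [0,1), α ∈ (0,1], if (a) Q(d) ≤ (1 − η)Q*, (b) the Armijo condition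
F(x + αd) ≤ F(x) + αγΔ holds, and (c) F(x) − F* ≥ (x − x*)ᵀH(x − x*), then
F(x + αd) − F* ≤ (1 − (1 − η)γα/2)(F(x) − F*). -/
theorem fast_linear_decrease_step {n : ℕ}
    (f : EuclideanSpace ℝ (Fin n) → ℝ) (ψ : EuclideanSpace ℝ (Fin n) → EReal)
    (H : EuclideanSpace ℝ (Fin n) →L[ℝ] EuclideanSpace ℝ (Fin n))
    (x xstar d : EuclideanSpace ℝ (Fin n)) (γ η α : ℝ)
    (hf : Differentiable ℝ f) (hfconv : ConvexOn ℝ Set.univ f)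
    (hψconv : ConvexE ψ) (hψproper : ProperPsi ψ) (hψclosed : ClosedPsi ψ)
    (hdom : ψ x ≠ ⊤)
    (hH : SymmCLM H) (hHpsd : ∀ e : EuclideanSpace ℝ (Fin n), 0 ≤ ⟪H e, e⟫)
    (hmin : ∀ y, Fm f ψ xstar ≤ Fm f ψ y)
    (hγ0 : 0 < γ) (hγ1 : γ < 1) (hη0 : 0 ≤ η) (hη1 : η < 1)
    (hα0 : 0 < α) (hα1 : α ≤ 1)
    (happrox : Qm f ψ H x d ≤ ((1 - η : ℝ) : EReal) * ⨅ e, Qm f ψ H x e)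
    (harmijo : Fm f ψ (x + α • d) ≤ Fm f ψ x + ((α * γ : ℝ) : EReal) * Dm f ψ x d)
    (hgrowth : ((⟪H (x - xstar), x - xstar⟫ : ℝ) : EReal) ≤ Fm f ψ x - Fm f ψ xstar) :
    Fm f ψ (x + α • d) - Fm f ψ xstar ≤
      ((1 - (1 - η) * γ * α / 2 : ℝ) : EReal) * (Fm f ψ x - Fm f ψ xstar) :=
  fast_linear_decrease_step_general f ψ H x xstar d γ η α hf hfconv hψproper hdom hHpsd hmin hγ0 hη1
    hα0 happrox harmijo hgrowth
end
end
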